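/- (Theorem 3.14.) If the PC-Bochner curvature tensor vanishes, i.e. 𝐁(X,Y,Z,W) = 0 for all X, Y, Z, W ∈ V (para-contact conformal flatness), then α₀² + β₀² = 1. -/

import Mathlib

/-!
Take `X` with `g(ξ, X) = 0` and `g(X, X) ≠ 0` and evaluate `𝐁(X, ξ, ξ, X)`. Since
`φ(grad α) = -(2n-1) grad β` puts `grad β` in the image of `φ`, which is `g`-orthogonal to `ξ`,
we get `dβ(ξ) = 0`, so the curvature identity reads `R(X, ξ)ξ = -(α₀² + β₀²)(X - η(X)ξ) + c φX`.
As `φ` is `g`-skew-adjoint it is traceless, whence `Ric(ξ, ξ) = -2n(α₀² + β₀²)`. In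
`𝐁(X, ξ, ξ, X)` every other Ricci term drops out and the terms in `k` cancel, leaving
`4(1 - α₀² - β₀²) g(X, X) / (2n + 4)`.
-/

/-- The Ricci tensor: `Ric R Y Z` is the trace of the linear map `X ↦ R X Y Z`. -/
noncomputable def Ric {V : Type*} [AddCommGroup V] [Module ℝ V]
    (R : V →ₗ[ℝ] V →ₗ[ℝ] V →ₗ[ℝ] V) (Y Z : V) : ℝ :=
  LinearMap.trace ℝ V ((LinearMap.applyₗ Z).comp (R.flip Y))

open Module
open LinearMap (BilinForm)

namespace LinearMap

namespace BilinForm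

variable {K V : Type*} [Field K] [AddCommGroup V] [Module K V] [FiniteDimensional K V]
  [Invertible (2 : K)] {B : BilinForm K V}

theorem trace_eq_zero_of_isSkewAdjoint (hB : B.Nondegenerate) {f : V →ₗ[K] V}
    (hf : B.IsSkewAdjoint f) : trace K V f = 0 := by
  have hconj : (B.toDual hB).conj f = -Dual.transpose (R := K) f := by
    ext ℓ x
    simpa [LinearEquiv.conj_apply, Dual.transpose_apply, toDual_def,
      apply_toDual_symm_apply] using hf ((B.toDual hB).symm ℓ) x
  have h := trace_conj' f (B.toDual hB)
  rw [hconj] at h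
  have h' : trace K V f = -trace K V f :=
    calc trace K V f = trace K (Dual K V) (-Dual.transpose f) := h.symm
      _ = -trace K (Dual K V) (Dual.transpose f) :=
        LinearMap.map_neg (trace K (Dual K V)) (Dual.transpose (R := K) f)
      _ = -trace K V f := by rw [trace_transpose']
  rw [← add_eq_zero_iff_eq_neg, ← two_mul] at h'
  exact (isUnit_of_invertible (2 : K)).mul_right_eq_zero.mp h'

theorem exists_isOrtho_and_self_ne_zero (hB : B.Nondegenerate) (hsymm : B.IsSymm) {x : V}
    (hx : B x x ≠ 0) (hV : 2 ≤ finrank K V) : ∃ y, B x y = 0 ∧ B y y ≠ 0 := by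
  set W := B.orthogonal (K ∙ x)
  have hW : (B.restrict W).Nondegenerate :=
    B.restrict_nondegenerate_orthogonal_spanSingleton hB hsymm.isRefl hx
  have : Nontrivial W := by
    apply (Module.finrank_pos_iff (R := K)).mp
    rw [finrank_orthogonal hB, finrank_span_singleton (ne_zero_of_not_isOrtho_self x hx)]
    omega
  have hW0 : B.restrict W ≠ 0 := by
    obtain ⟨w, hw⟩ := exists_ne (0 : W)
    intro h0
    exact hw (hW.1 w fun v => by rw [h0]; rfl)
  obtain ⟨y, hy⟩ := exists_bilinForm_self_ne_zero hW0 (isSymm_iff.mp (hsymm.restrict W))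
  exact ⟨y, y.2 x (Submodule.mem_span_singleton_self x), hy⟩

end BilinForm

end LinearMap

section Paracontact

variable {V : Type*} [AddCommGroup V] [Module ℝ V]

structure IsAlmostParacontactMetric (g : BilinForm ℝ V) (φ : V →ₗ[ℝ] V) (ξ : V)
    (η : V →ₗ[ℝ] ℝ) : Prop where
  isSymm : g.IsSymm
  phi_xi : φ ξ = 0
  eta_phi : ∀ X, η (φ X) = 0
  eta_xi : η ξ = 1
  phi_phi : ∀ X, φ (φ X) = X - η X • ξ
  g_phi_phi : ∀ X Y, g (φ X) (φ Y) = -g X Y + η X * η Y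

namespace IsAlmostParacontactMetric

variable {g : BilinForm ℝ V} {φ : V →ₗ[ℝ] V} {ξ : V} {η : V →ₗ[ℝ] ℝ}

theorem g_xi_right (hP : IsAlmostParacontactMetric g φ ξ η) (X : V) : g X ξ = η X := by
  have h := hP.g_phi_phi X ξ
  rw [hP.phi_xi, map_zero, hP.eta_xi] at h
  linarith

theorem g_xi_left (hP : IsAlmostParacontactMetric g φ ξ η) (X : V) : g ξ X = η X :=
  (hP.isSymm.eq ξ X).trans (hP.g_xi_right X)

theorem isSkewAdjoint (hP : IsAlmostParacontactMetric g φ ξ η) : g.IsSkewAdjoint φ := by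
  intro X Y
  have h := hP.g_phi_phi X (φ Y)
  simp only [hP.phi_phi Y, map_sub, map_smul, hP.g_xi_right, hP.eta_phi, smul_eq_mul,
    mul_zero, sub_zero] at h
  rw [Pi.neg_apply, map_neg]
  linarith

theorem g_phi_self (hP : IsAlmostParacontactMetric g φ ξ η) (X : V) : g (φ X) X = 0 := by
  have h : g (φ X) X = -g X (φ X) := by simpa using hP.isSkewAdjoint X X
  linarith [hP.isSymm.eq X (φ X)]

theorem g_self_phi (hP : IsAlmostParacontactMetric g φ ξ η) (X : V) : g X (φ X) = 0 :=
  (hP.isSymm.eq X (φ X)).trans (hP.g_phi_self X)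

theorem trace_phi [FiniteDimensional ℝ V] (hP : IsAlmostParacontactMetric g φ ξ η)
    (hg : g.Nondegenerate) : LinearMap.trace ℝ V φ = 0 :=
  LinearMap.BilinForm.trace_eq_zero_of_isSkewAdjoint hg hP.isSkewAdjoint

theorem apply_xi_eq_zero_of_apply_eq_neg_smul (hP : IsAlmostParacontactMetric g φ ξ η)
    {A B : V} {β : V →ₗ[ℝ] ℝ} {m : ℝ} (hm : m ≠ 0) (hB : ∀ X, g B X = β X)
    (hA : φ A = -(m • B)) : β ξ = 0 := by
  have h := hP.g_xi_right (φ A)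
  rw [hP.eta_phi, hA, map_neg, map_smul, LinearMap.neg_apply, LinearMap.smul_apply, hB,
    smul_eq_mul, neg_eq_zero] at h
  exact (mul_eq_zero.mp h).resolve_left hm

end IsAlmostParacontactMetric

def IsTransParaSasakianCurvature (R : V →ₗ[ℝ] V →ₗ[ℝ] V →ₗ[ℝ] V) (φ : V →ₗ[ℝ] V) (ξ : V)
    (η : V →ₗ[ℝ] ℝ) (α₀ β₀ : ℝ) (dα dβ : V →ₗ[ℝ] ℝ) : Prop :=
  ∀ X Y : V, R X Y ξ =
    -((α₀ ^ 2 + β₀ ^ 2) • (η Y • X - η X • Y))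
    - (2 * α₀ * β₀) • (η Y • φ X - η X • φ Y)
    - dα X • φ Y + dα Y • φ X + dβ Y • φ (φ X) - dβ X • φ (φ Y)

theorem IsTransParaSasakianCurvature.apply_xi_xi {R : V →ₗ[ℝ] V →ₗ[ℝ] V →ₗ[ℝ] V}
    {φ : V →ₗ[ℝ] V} {ξ : V} {η : V →ₗ[ℝ] ℝ} {α₀ β₀ : ℝ} {dα dβ : V →ₗ[ℝ] ℝ}
    (hR : IsTransParaSasakianCurvature R φ ξ η α₀ β₀ dα dβ) (hφξ : φ ξ = 0) (hηξ : η ξ = 1)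
    (hβ : dβ ξ = 0) (X : V) :
    R X ξ ξ = -(α₀ ^ 2 + β₀ ^ 2) • (X - η X • ξ) + (dα ξ - 2 * α₀ * β₀) • φ X := by
  rw [hR, hηξ, hφξ, hβ, map_zero]
  module

theorem ric_self_eq_of_apply_self_self [FiniteDimensional ℝ V]
    {R : V →ₗ[ℝ] V →ₗ[ℝ] V →ₗ[ℝ] V} {φ : V →ₗ[ℝ] V} {ξ : V} {η : V →ₗ[ℝ] ℝ} {a c : ℝ}
    (hR : ∀ X, R X ξ ξ = -a • (X - η X • ξ) + c • φ X) (hφ : LinearMap.trace ℝ V φ = 0)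
    (hηξ : η ξ = 1) : Ric R ξ ξ = -a * (finrank ℝ V - 1) := by
  have h : (LinearMap.applyₗ ξ).comp (R.flip ξ) =
      -a • (LinearMap.id - η.smulRight ξ) + c • φ := by
    ext X
    simpa using hR X
  rw [Ric, h]
  simp [LinearMap.trace_smulRight, hφ, hηξ]

noncomputable def pcBochner (n : ℕ) (k : ℝ) (g : BilinForm ℝ V) (φ : V →ₗ[ℝ] V)
    (η : V →ₗ[ℝ] ℝ) (R : V →ₗ[ℝ] V →ₗ[ℝ] V →ₗ[ℝ] V) (X Y Z W : V) : ℝ :=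
  g (R X Y Z) W
    + (1 / (2 * (n : ℝ) + 4)) * (Ric R X Z * g Y W - Ric R Y Z * g X W
      + Ric R Y W * g X Z - Ric R X W * g Y Z
      + Ric R (φ X) Z * g Y (φ W) - Ric R (φ Y) Z * g X (φ W)
      + Ric R (φ Y) W * g X (φ Z) - Ric R (φ X) W * g Y (φ Z)
      + 2 * Ric R (φ X) Y * g Z (φ W) + 2 * Ric R (φ Z) W * g X (φ Y)
      - Ric R X Z * (η Y * η W) + Ric R Y Z * (η X * η W)
      - Ric R Y W * (η X * η Z) + Ric R X W * (η Y * η Z))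
    + ((k - 4) / (2 * (n : ℝ) + 4)) * (g X Z * g Y W - g Y Z * g X W)
    - ((k + 2 * (n : ℝ)) / (2 * (n : ℝ) + 4)) * (g Y (φ W) * g X (φ Z)
      - g X (φ W) * g Y (φ Z) + 2 * g X (φ Y) * g Z (φ W))
    - (k / (2 * (n : ℝ) + 4)) * (g X Z * (η Y * η W) - g Y Z * (η X * η W)
      + g Y W * (η X * η Z) - g X W * (η Y * η Z))

theorem pcBochner_apply_xi_xi_self {n : ℕ} (k : ℝ) {g : BilinForm ℝ V} {φ : V →ₗ[ℝ] V}
    {ξ : V} {η : V →ₗ[ℝ] ℝ} {R : V →ₗ[ℝ] V →ₗ[ℝ] V →ₗ[ℝ] V} {a c : ℝ}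
    (hP : IsAlmostParacontactMetric g φ ξ η)
    (hR : ∀ X, R X ξ ξ = -a • (X - η X • ξ) + c • φ X) (hRic : Ric R ξ ξ = -(2 * n) * a)
    {X : V} (hX : η X = 0) :
    pcBochner n k g φ η R X ξ ξ X = 4 * (1 - a) / (2 * n + 4) * g X X := by
  simp only [pcBochner, hR, hRic, hP.phi_xi, hP.eta_xi, hX, hP.g_xi_right, hP.g_xi_left,
    hP.g_phi_self, hP.g_self_phi, hP.eta_phi, map_add, map_sub, map_smul, map_zero,
    LinearMap.add_apply, LinearMap.sub_apply, LinearMap.smul_apply, smul_eq_mul]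
  field_simp
  ring

end Paracontact

theorem stmt_17_general
    (n : ℕ) (hn : 1 ≤ n)
    (V : Type*) [AddCommGroup V] [Module ℝ V] [FiniteDimensional ℝ V]
    (hdim : Module.finrank ℝ V = 2 * n + 1)
    (g : LinearMap.BilinForm ℝ V)
    (hg_symm : ∀ X Y : V, g X Y = g Y X)
    (hg_nondeg : g.Nondegenerate)
    (φ : V →ₗ[ℝ] V) (ξ : V) (η : V →ₗ[ℝ] ℝ)
    (hφξ : φ ξ = 0) (hηφ : ∀ X : V, η (φ X) = 0)
    (hηξ : η ξ = 1) (hφ2 : ∀ X : V, φ (φ X) = X - η X • ξ)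
    (hgφ : ∀ X Y : V, g (φ X) (φ Y) = - g X Y + η X * η Y)
    (R : V →ₗ[ℝ] V →ₗ[ℝ] V →ₗ[ℝ] V)
    (α₀ β₀ : ℝ) (dα dβ : V →ₗ[ℝ] ℝ)
    (hTPS : ∀ X Y : V, R X Y ξ =
      -((α₀ ^ 2 + β₀ ^ 2) • (η Y • X - η X • Y))
      - (2 * α₀ * β₀) • (η Y • φ X - η X • φ Y)
      - dα X • φ Y + dα Y • φ X + dβ Y • φ (φ X) - dβ X • φ (φ Y))
    (A B : V) (hB : ∀ X : V, g B X = dβ X)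
    (hgrad : φ A = -((2 * (n : ℝ) - 1) • B))
    (k : ℝ)
    (Bt : V → V → V → V → ℝ)
    (hBt : ∀ X Y Z W : V, Bt X Y Z W = g (R X Y Z) W
      + (1 / (2 * (n : ℝ) + 4)) * (Ric R X Z * g Y W - Ric R Y Z * g X W
        + Ric R Y W * g X Z - Ric R X W * g Y Z
        + Ric R (φ X) Z * g Y (φ W) - Ric R (φ Y) Z * g X (φ W)
        + Ric R (φ Y) W * g X (φ Z) - Ric R (φ X) W * g Y (φ Z)
        + 2 * Ric R (φ X) Y * g Z (φ W) + 2 * Ric R (φ Z) W * g X (φ Y)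
        - Ric R X Z * (η Y * η W) + Ric R Y Z * (η X * η W)
        - Ric R Y W * (η X * η Z) + Ric R X W * (η Y * η Z))
      + ((k - 4) / (2 * (n : ℝ) + 4)) * (g X Z * g Y W - g Y Z * g X W)
      - ((k + 2 * (n : ℝ)) / (2 * (n : ℝ) + 4)) * (g Y (φ W) * g X (φ Z)
        - g X (φ W) * g Y (φ Z) + 2 * g X (φ Y) * g Z (φ W))
      - (k / (2 * (n : ℝ) + 4)) * (g X Z * (η Y * η W) - g Y Z * (η X * η W)
        + g Y W * (η X * η Z) - g X W * (η Y * η Z)))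
    (hflat : ∀ X Y Z W : V, Bt X Y Z W = 0)
    :
    α₀ ^ 2 + β₀ ^ 2 = 1 := by
  have hP : IsAlmostParacontactMetric g φ ξ η := ⟨⟨hg_symm⟩, hφξ, hηφ, hηξ, hφ2, hgφ⟩
  have h2n : (2 * n - 1 : ℝ) ≠ 0 := by
    have : (1 : ℝ) ≤ n := mod_cast hn
    linarith
  have hβ : dβ ξ = 0 := hP.apply_xi_eq_zero_of_apply_eq_neg_smul h2n hB hgrad
  have hRξ := IsTransParaSasakianCurvature.apply_xi_xi hTPS hφξ hηξ hβ
  have hRic : Ric R ξ ξ = -(2 * n) * (α₀ ^ 2 + β₀ ^ 2) := by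
    rw [ric_self_eq_of_apply_self_self hRξ (hP.trace_phi hg_nondeg) hηξ, hdim]
    push_cast
    ring
  obtain ⟨X, hξX, hXX⟩ := LinearMap.BilinForm.exists_isOrtho_and_self_ne_zero (x := ξ)
    hg_nondeg hP.isSymm (by rw [hP.g_xi_left, hηξ]; exact one_ne_zero) (by omega)
  have hX : η X = 0 := (hP.g_xi_left X).symm.trans hξX
  have h : pcBochner n k g φ η R X ξ ξ X = 0 := (hBt X ξ ξ X).symm.trans (hflat X ξ ξ X)
  rw [pcBochner_apply_xi_xi_self k hP hRξ hRic hX] at h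
  have hn4 : (2 * n + 4 : ℝ) ≠ 0 := by positivity
  simp only [mul_eq_zero, div_eq_zero_iff, hXX, hn4, or_false, four_ne_zero, false_or] at h
  linarith

theorem stmt_17
    (n : ℕ) (hn : 1 ≤ n)
    (V : Type*) [AddCommGroup V] [Module ℝ V] [FiniteDimensional ℝ V]
    (hdim : Module.finrank ℝ V = 2 * n + 1)
    (g : LinearMap.BilinForm ℝ V)
    (hg_symm : ∀ X Y : V, g X Y = g Y X)
    (hg_nondeg : g.Nondegenerate)
    (φ : V →ₗ[ℝ] V) (ξ : V) (η : V →ₗ[ℝ] ℝ)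
    (hφξ : φ ξ = 0) (hηφ : ∀ X : V, η (φ X) = 0)
    (hηξ : η ξ = 1) (hφ2 : ∀ X : V, φ (φ X) = X - η X • ξ)
    (hgφ : ∀ X Y : V, g (φ X) (φ Y) = - g X Y + η X * η Y)
    (R : V →ₗ[ℝ] V →ₗ[ℝ] V →ₗ[ℝ] V)
    (hR_a1 : ∀ X Y Z W : V, g (R X Y Z) W = - g (R Y X Z) W)
    (hR_a2 : ∀ X Y Z W : V, g (R X Y Z) W = - g (R X Y W) Z)
    (hR_pair : ∀ X Y Z W : V, g (R X Y Z) W = g (R Z W X) Y)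
    (α₀ β₀ : ℝ) (dα dβ : V →ₗ[ℝ] ℝ)
    (hTPS : ∀ X Y : V, R X Y ξ =
      -((α₀ ^ 2 + β₀ ^ 2) • (η Y • X - η X • Y))
      - (2 * α₀ * β₀) • (η Y • φ X - η X • φ Y)
      - dα X • φ Y + dα Y • φ X + dβ Y • φ (φ X) - dβ X • φ (φ Y))
    (Qop : V →ₗ[ℝ] V) (hQ : ∀ X Y : V, g (Qop X) Y = Ric R X Y)
    (scal : ℝ) (hscal : scal = LinearMap.trace ℝ V Qop)
    (A B : V) (hA : ∀ X : V, g A X = dα X) (hB : ∀ X : V, g B X = dβ X)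
    (hgrad : φ A = -((2 * (n : ℝ) - 1) • B))
    (k : ℝ) (hk : k = -((scal - 2 * (n : ℝ)) / (2 * (n : ℝ) + 2)))
    (Bt : V → V → V → V → ℝ)
    (hBt : ∀ X Y Z W : V, Bt X Y Z W = g (R X Y Z) W
      + (1 / (2 * (n : ℝ) + 4)) * (Ric R X Z * g Y W - Ric R Y Z * g X W
        + Ric R Y W * g X Z - Ric R X W * g Y Z
        + Ric R (φ X) Z * g Y (φ W) - Ric R (φ Y) Z * g X (φ W)
        + Ric R (φ Y) W * g X (φ Z) - Ric R (φ X) W * g Y (φ Z)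
        + 2 * Ric R (φ X) Y * g Z (φ W) + 2 * Ric R (φ Z) W * g X (φ Y)
        - Ric R X Z * (η Y * η W) + Ric R Y Z * (η X * η W)
        - Ric R Y W * (η X * η Z) + Ric R X W * (η Y * η Z))
      + ((k - 4) / (2 * (n : ℝ) + 4)) * (g X Z * g Y W - g Y Z * g X W)
      - ((k + 2 * (n : ℝ)) / (2 * (n : ℝ) + 4)) * (g Y (φ W) * g X (φ Z)
        - g X (φ W) * g Y (φ Z) + 2 * g X (φ Y) * g Z (φ W))
      - (k / (2 * (n : ℝ) + 4)) * (g X Z * (η Y * η W) - g Y Z * (η X * η W)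
        + g Y W * (η X * η Z) - g X W * (η Y * η Z)))
    (hflat : ∀ X Y Z W : V, Bt X Y Z W = 0)
    :
    α₀ ^ 2 + β₀ ^ 2 = 1 :=
  stmt_17_general n hn V hdim g hg_symm hg_nondeg φ ξ η hφξ hηφ hηξ hφ2 hgφ R α₀ β₀ dα dβ hTPS A B
    hB hgrad k Bt hBt hflat
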